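/- Let 𝔤 be a finite-dimensional Lie algebra over an algebraically closed field of characteristic zero, 𝔥 a commutative ideal, X ⊆ 𝔤* a closed irreducible G-invariant subvariety, 𝔵_𝔥 ⊆ 𝔥* its image under restriction, and K = F(𝔵_𝔥). Define ĝ = {ξ ∈ 𝔤⊗K : [ξ,𝔥] vanishes on 𝔵_𝔥} and ĥ = {ξ ∈ 𝔥⊗K : α(ξ(α)) = 0 for all α ∈ 𝔵_𝔥 where defined}. Then 𝔥⊗K is an ideal of ĝ, ĥ is an ideal of ĝ, and for generic α ∈ 𝔵_𝔥 the evaluation ĝ(α) := {ξ(α) : ξ ∈ ĝ, ξ defined at α} equals the stabilizer 𝔤_α = {x ∈ 𝔤 : α([x,𝔥]) = 0}. -/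

import Mathlib

/-!
Parts (a) and (b) are formal: the span of `1 ⊗ 𝔥` is the base change of the Lie ideal `𝔥`, and
the condition defining `ĝ` says that `εK ∘ ad ξ` vanishes on the generators of that span.

For (c), in bases of `𝔤` and `𝔥` the stabilizer `𝔤_α` is the kernel of the matrix `M(α)` with
entries `α ⁅b i, bh k⁆`, which are linear forms in `α`; an element of `ĝ` with numerators `v` over
`S(𝔥)` is exactly a vector with `M v ≡ 0 mod I₀`. Hence the value at `α ∈ 𝔵_𝔥` of any element of
`ĝ` lies in `ker M(α)`. Conversely, choose over `K` a generalized inverse `H` of `M`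
(`M H M = M`) and clear its denominators by some `s ∉ I₀`. Then `B = s - H' M` has `M B ≡ 0`
and `B(α) = s(α) • id` on `ker M(α)`, so where `s(α) ≠ 0` every `x ∈ 𝔤_α` is the value of the
element `B x / s` of `ĝ`.
-/

open MvPolynomial
open scoped TensorProduct

variable {F : Type*} [Field F]

/-- Linear polynomial (coordinate expression of a vector). -/
noncomputable def linPoly {ι M : Type*} [Fintype ι] [AddCommGroup M] [Module F M]
    (b : Module.Basis ι F M) (v : M) : MvPolynomial ι F :=
  ∑ i, MvPolynomial.C (b.repr v i) * MvPolynomial.X i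

noncomputable def kirillovBracket {ι g : Type*} [Fintype ι] [DecidableEq ι]
    [LieRing g] [LieAlgebra F g]
    (b : Module.Basis ι F g) (f p : MvPolynomial ι F) : MvPolynomial ι F :=
  ∑ i, ∑ j, pderiv i f * pderiv j p * linPoly b ⁅b i, b j⁆

namespace LinearMap

variable {K V W : Type*} [DivisionRing K] [AddCommGroup V] [Module K V] [AddCommGroup W]
  [Module K W]

theorem exists_comp_comp_eq_self (f : V →ₗ[K] W) : ∃ h : W →ₗ[K] V, f ∘ₗ h ∘ₗ f = f := by
  obtain ⟨σ, hσ⟩ := f.rangeRestrict.exists_rightInverse_of_surjective f.range_rangeRestrict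
  obtain ⟨τ, hτ⟩ := f.range.subtype.exists_leftInverse_of_injective f.range.ker_subtype
  refine ⟨σ ∘ₗ τ, ext fun v => ?_⟩
  have hτv : τ (f.range.subtype (f.rangeRestrict v)) = f.rangeRestrict v :=
    LinearMap.congr_fun hτ _
  have hσv : f.rangeRestrict (σ (f.rangeRestrict v)) = f.rangeRestrict v :=
    LinearMap.congr_fun hσ _
  calc f (σ (τ (f.range.subtype (f.rangeRestrict v))))
      = f.range.subtype (f.rangeRestrict (σ (f.rangeRestrict v))) := by rw [hτv]; rfl
    _ = f v := by rw [hσv]; rfl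

end LinearMap

theorem exists_common_denominator {R K : Type*} [CommRing R] [Field K] (φ : R →+* K)
    (hfrac : ∀ x : K, ∃ p q : R, φ q ≠ 0 ∧ x * φ q = φ p) {E : Type*} [Fintype E]
    (v : E → K) :
    ∃ s : R, φ s ≠ 0 ∧ ∃ P : E → R, ∀ e, φ (P e) = φ s * v e := by
  classical
  choose p q hq hpq using fun e => hfrac (v e)
  refine ⟨∏ e, q e, by simpa [Finset.prod_ne_zero_iff] using hq,
    fun e => p e * ∏ e' ∈ Finset.univ.erase e, q e', fun e => ?_⟩
  rw [map_mul, ← hpq, map_prod, map_prod,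
    ← Finset.mul_prod_erase Finset.univ (fun e => φ (q e)) (Finset.mem_univ e)]
  ring

namespace Matrix

variable {m n : Type*} [Fintype n]

theorem exists_mul_mul_eq_self [Fintype m] {K : Type*} [Field K] (A : Matrix m n K) :
    ∃ H : Matrix n m K, A * H * A = A := by
  classical
  obtain ⟨h, hh⟩ := (toLin' A).exists_comp_comp_eq_self
  refine ⟨LinearMap.toMatrix' h, toLin'.injective ?_⟩
  simpa [toLin'_mul, LinearMap.comp_assoc] using hh

theorem map_mulVec_eq_zero_of_ker_le {R K L : Type*} [CommRing R] [CommRing K] [CommRing L]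
    (φ : R →+* K) (ψ : R →+* L) (hker : ∀ f, φ f = 0 → ψ f = 0)
    (M : Matrix m n R) (v : n → R) (hv : M.map φ *ᵥ (φ ∘ v) = 0) :
    M.map ψ *ᵥ (ψ ∘ v) = 0 :=
  funext fun k => by
    rw [← ψ.map_mulVec, hker _ (by rw [φ.map_mulVec, hv, Pi.zero_apply]), Pi.zero_apply]

variable {R K : Type*} [CommRing R] [Field K] (φ : R →+* K)

theorem exists_map_eq_smul [Fintype m] (hfrac : ∀ x : K, ∃ p q : R, φ q ≠ 0 ∧ x * φ q = φ p)
    (H : Matrix n m K) : ∃ s : R, φ s ≠ 0 ∧ ∃ H' : Matrix n m R, H'.map φ = φ s • H := by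
  obtain ⟨s, hs, P, hP⟩ := exists_common_denominator φ hfrac fun e : n × m => H e.1 e.2
  exact ⟨s, hs, of fun i k => P (i, k), ext fun i k => hP (i, k)⟩

theorem exists_mul_map_eq_zero_and_mulVec_eq_smul [Fintype m]
    (hfrac : ∀ x : K, ∃ p q : R, φ q ≠ 0 ∧ x * φ q = φ p) (L : Type*) [CommRing L]
    (M : Matrix m n R) :
    ∃ s : R, φ s ≠ 0 ∧ ∃ B : Matrix n n R, (M * B).map φ = 0 ∧
      ∀ (ψ : R →+* L) (x : n → L), M.map ψ *ᵥ x = 0 → B.map ψ *ᵥ x = ψ s • x := by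
  classical
  obtain ⟨H, hH⟩ := (M.map φ).exists_mul_mul_eq_self
  obtain ⟨s, hs, H', hH'⟩ := exists_map_eq_smul φ hfrac H
  -- `B = s • 1 - H' * M` is `s` times the projection `1 - H * M` onto the kernel over `K`,
  -- but it is defined over `R` and so can be specialised along any `ψ`.
  refine ⟨s, hs, s • 1 - H' * M, ?_, fun ψ x hx => ?_⟩
  · rw [Matrix.mul_sub, ← Matrix.mul_assoc, Matrix.map_sub _ (map_sub φ), Matrix.map_mul,
      Matrix.map_mul, Matrix.map_mul, hH', Matrix.map_smul' _ _ _ (map_mul φ),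
      Matrix.map_one _ φ.map_zero φ.map_one, Matrix.mul_smul, Matrix.mul_one, Matrix.mul_smul,
      Matrix.smul_mul, hH, sub_self]
  · rw [Matrix.map_sub _ (map_sub ψ), sub_mulVec, Matrix.map_mul, ← mulVec_mulVec, hx,
      mulVec_zero, sub_zero, Matrix.map_smul' _ _ _ (map_mul ψ),
      Matrix.map_one _ ψ.map_zero ψ.map_one, smul_mulVec, one_mulVec]

end Matrix

section LinPoly

variable {ι M : Type*} [Fintype ι] [AddCommGroup M] [Module F M]

noncomputable def linPolyₗ (b : Module.Basis ι F M) : M →ₗ[F] MvPolynomial ι F where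
  toFun := linPoly b
  map_add' v w := by simp [linPoly, add_mul, Finset.sum_add_distrib]
  map_smul' c v := by simp [linPoly, Finset.mul_sum, mul_assoc, smul_eq_C_mul]

@[simp]
theorem linPolyₗ_apply (b : Module.Basis ι F M) (v : M) : linPolyₗ b v = linPoly b v :=
  rfl

theorem aeval_linPoly (b : Module.Basis ι F M) (α : Module.Dual F M) (v : M) :
    aeval (fun i => α (b i)) (linPoly b v) = α v := by
  simp only [linPoly, map_sum, map_mul, aeval_C, aeval_X, Algebra.algebraMap_self,
    RingHom.id_apply]
  conv_rhs => rw [← b.sum_repr v]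
  simp only [map_sum, map_smul, smul_eq_mul]

end LinPoly

theorem exists_eq_sum_tmul {ι M : Type*} [Fintype ι] [AddCommGroup M] [Module F M]
    (A : Type*) [CommRing A] [Algebra F A] (b : Module.Basis ι F M) (w : A ⊗[F] M) :
    ∃ v : ι → A, w = ∑ i, v i ⊗ₜ b i := by
  refine ⟨(Algebra.TensorProduct.basis A b).repr w, ?_⟩
  conv_lhs => rw [← (Algebra.TensorProduct.basis A b).sum_repr w]
  simp [TensorProduct.smul_tmul']

theorem lift_lsmul_aeval_sum_tmul {ι κ M : Type*} [Fintype ι] [AddCommGroup M] [Module F M]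
    (b : Module.Basis ι F M) (a : κ → F) (v : ι → MvPolynomial κ F) :
    TensorProduct.lift
        ((LinearMap.lsmul F M).comp (aeval a : MvPolynomial κ F →ₐ[F] F).toLinearMap)
        (∑ i, v i ⊗ₜ[F] b i) = ∑ i, eval a (v i) • b i := by
  simp

theorem LieSubmodule.span_setOf_one_tmul_eq_baseChange {L M : Type*} [LieRing L]
    [LieAlgebra F L] [AddCommGroup M] [Module F M] [LieRingModule L M] [LieModule F L M]
    (A : Type*) [CommRing A] [Algebra F A] (N : LieSubmodule F L M) :
    Submodule.span A {w : A ⊗[F] M | ∃ y ∈ N, w = 1 ⊗ₜ y} = N.baseChange A := by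
  rw [coe_baseChange, Submodule.baseChange_eq_span]
  congr 1
  ext w
  simp [eq_comm]

section LieIdeal

open Matrix

variable {g : Type*} [LieRing g] [LieAlgebra F g] (hI : LieIdeal F g)
  {A : Type*} [CommRing A] [Algebra F A]

theorem lie_mem_span_one_tmul (ξ : A ⊗[F] g) {w : A ⊗[F] g}
    (hw : w ∈ Submodule.span A {w : A ⊗[F] g | ∃ y ∈ hI, w = 1 ⊗ₜ y}) :
    ⁅ξ, w⁆ ∈ Submodule.span A {w : A ⊗[F] g | ∃ y ∈ hI, w = 1 ⊗ₜ y} := by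
  rw [LieSubmodule.span_setOf_one_tmul_eq_baseChange] at hw ⊢
  exact (hI.baseChange A).lie_mem hw

theorem apply_lie_eq_zero_of_mem_span_one_tmul (ε : A ⊗[F] g →ₗ[A] A) {ξ w : A ⊗[F] g}
    (hξ : ∀ h ∈ hI, ε ⁅ξ, 1 ⊗ₜ h⁆ = 0)
    (hw : w ∈ Submodule.span A {w : A ⊗[F] g | ∃ y ∈ hI, w = 1 ⊗ₜ y}) :
    ε ⁅ξ, w⁆ = 0 := by
  have hspan : Submodule.span A {w : A ⊗[F] g | ∃ y ∈ hI, w = 1 ⊗ₜ y} ≤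
      LinearMap.ker (ε ∘ₗ (LieModule.toEnd A (A ⊗[F] g) (A ⊗[F] g) ξ : Module.End A _)) :=
    Submodule.span_le.mpr fun _ ⟨y, hy, hw⟩ => hw ▸ hξ y hy
  exact hspan hw

variable {ι κ : Type*} [Fintype ι] [Fintype κ] (b : Module.Basis ι F g)
  (bh : Module.Basis κ F hI)

/-- Entry `(k, i)` is the linear form `α ↦ α ⁅b i, bh k⁆` on `𝔥*`, so at `α` the kernel of this
matrix is the stabilizer `𝔤_α` in the coordinates of `b`. -/
noncomputable def stabilizerMatrix : Matrix κ ι (MvPolynomial κ F) :=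
  Matrix.of fun k i => linPoly bh ⁅b i, bh k⁆

theorem forall_sum_mul_linPoly_lie_eq_zero_iff (ψ : MvPolynomial κ F →ₐ[F] A) (c : ι → A) :
    (∀ h : hI, ∑ i, c i * ψ (linPoly bh ⁅b i, h⁆) = 0) ↔
      (stabilizerMatrix hI b bh).map ψ *ᵥ c = 0 := by
  have hrow : ∀ k, ((stabilizerMatrix hI b bh).map ψ *ᵥ c) k =
      ∑ i, c i * ψ (linPoly bh ⁅b i, bh k⁆) := fun k => by
    simp [stabilizerMatrix, Matrix.mulVec, dotProduct, mul_comm]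
  refine ⟨fun hc => funext fun k => by rw [hrow k, hc (bh k), Pi.zero_apply], fun hM h => ?_⟩
  let f : hI →ₗ[F] A :=
    ∑ i, c i • (ψ.toLinearMap ∘ₗ linPolyₗ bh ∘ₗ (LieModule.toEnd F g hI (b i) : Module.End F hI))
  have hf : f = 0 := bh.ext fun k => by
    simpa [f, hM] using (hrow k).symm
  simpa [f] using LinearMap.congr_fun hf h

theorem forall_dual_lie_eq_zero_iff (α : Module.Dual F hI) (x : g) :
    (∀ h : hI, α ⁅x, h⁆ = 0) ↔
      (stabilizerMatrix hI b bh).map (eval fun k => α (bh k)) *ᵥ b.repr x = 0 := by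
  rw [← coe_aeval_eq_eval, AlgHom.coe_toRingHom, ← forall_sum_mul_linPoly_lie_eq_zero_iff]
  refine forall_congr' fun h => ?_
  conv_lhs => rw [← b.sum_repr x]
  simp only [aeval_linPoly, sum_lie, smul_lie, map_sum, map_smul, smul_eq_mul]

theorem apply_lie_sum_tmul_one_tmul (toA : MvPolynomial κ F →ₐ[F] A) (ε : A ⊗[F] g →ₗ[A] A)
    (hε : ∀ h : hI, ε ((1 : A) ⊗ₜ[F] (h : g)) = toA (linPoly bh h)) (c : ι → A) (h : hI) :
    ε ⁅∑ i, c i ⊗ₜ[F] b i, (1 : A) ⊗ₜ[F] (h : g)⁆ = ∑ i, c i * toA (linPoly bh ⁅b i, h⁆) := by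
  simp only [sum_lie, LieAlgebra.ExtendScalars.bracket_tmul, mul_one, map_sum]
  refine Finset.sum_congr rfl fun i _ => ?_
  have hsmul : c i ⊗ₜ[F] ⁅b i, (h : g)⁆ = c i • ((1 : A) ⊗ₜ[F] ⁅b i, (h : g)⁆) := by
    rw [TensorProduct.smul_tmul', smul_eq_mul, mul_one]
  rw [hsmul, map_smul, smul_eq_mul]
  exact congrArg _ (hε ⁅b i, h⁆)

theorem forall_apply_lie_one_tmul_eq_zero_iff (toA : MvPolynomial κ F →ₐ[F] A)
    (ε : A ⊗[F] g →ₗ[A] A) (hε : ∀ h : hI, ε ((1 : A) ⊗ₜ[F] (h : g)) = toA (linPoly bh h))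
    (c : ι → A) :
    (∀ h ∈ hI, ε ⁅∑ i, c i ⊗ₜ[F] b i, (1 : A) ⊗ₜ[F] h⁆ = 0) ↔
      (stabilizerMatrix hI b bh).map toA *ᵥ c = 0 := by
  rw [← forall_sum_mul_linPoly_lie_eq_zero_iff]
  simp only [← apply_lie_sum_tmul_one_tmul hI b bh toA ε hε]
  exact ⟨fun H h => H h h.2, fun H h hh => H ⟨h, hh⟩⟩

end LieIdeal

section GenericEvaluation

open Matrix

variable {g : Type*} [LieRing g] [LieAlgebra F g] (hI : LieIdeal F g) {ι κ : Type*} [Fintype ι]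
  [Fintype κ] (bh : Module.Basis κ F hI) {K : Type*} [Field K]
  [Algebra F K] (toK : MvPolynomial κ F →ₐ[F] K) (εK : K ⊗[F] g →ₗ[K] K)

theorem dual_lie_eq_zero_of_lift_eq_smul (b : Module.Basis ι F g)
    (hεK : ∀ h : hI, εK ((1 : K) ⊗ₜ[F] (h : g)) = toK (linPoly bh h)) (α : Module.Dual F hI)
    (hα : ∀ f, toK f = 0 → eval (fun k => α (bh k)) f = 0) {q : MvPolynomial κ F}
    (hq : eval (fun k => α (bh k)) q ≠ 0) {w : MvPolynomial κ F ⊗[F] g} {x : g}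
    (hw : ∀ h ∈ hI, εK ⁅TensorProduct.map toK.toLinearMap LinearMap.id w,
      ((1 : K) ⊗ₜ[F] h : K ⊗[F] g)⁆ = 0)
    (hwx : TensorProduct.lift ((LinearMap.lsmul F g).comp
      (aeval fun k => α (bh k) : MvPolynomial κ F →ₐ[F] F).toLinearMap) w
        = eval (fun k => α (bh k)) q • x) :
    ∀ h : hI, α ⁅x, h⁆ = 0 := by
  obtain ⟨v, rfl⟩ := exists_eq_sum_tmul _ b w
  simp only [map_sum, TensorProduct.map_tmul, AlgHom.toLinearMap_apply, LinearMap.id_coe,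
    id_eq] at hw
  rw [forall_apply_lie_one_tmul_eq_zero_iff hI b bh toK εK hεK] at hw
  rw [lift_lsmul_aeval_sum_tmul b, ← b.equivFun_symm_apply, LinearEquiv.symm_apply_eq,
    map_smul, b.equivFun_apply] at hwx
  have hM := map_mulVec_eq_zero_of_ker_le toK.toRingHom (eval fun k => α (bh k)) hα _ v hw
  rw [forall_dual_lie_eq_zero_iff hI b bh]
  rw [show _ ∘ v = _ from hwx, mulVec_smul] at hM
  exact (smul_eq_zero.mp hM).resolve_left hq

theorem exists_lift_eq_smul_of_dual_lie_eq_zero (b : Module.Basis ι F g)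
    (hεK : ∀ h : hI, εK ((1 : K) ⊗ₜ[F] (h : g)) = toK (linPoly bh h)) {s : MvPolynomial κ F}
    {B : Matrix ι ι (MvPolynomial κ F)} (hMB : (stabilizerMatrix hI b bh * B).map toK = 0)
    (α : Module.Dual F hI)
    (hB : ∀ y : ι → F, (stabilizerMatrix hI b bh).map (eval fun k => α (bh k)) *ᵥ y = 0 →
      B.map (eval fun k => α (bh k)) *ᵥ y = eval (fun k => α (bh k)) s • y)
    {x : g} (hx : ∀ h : hI, α ⁅x, h⁆ = 0) :
    ∃ w : MvPolynomial κ F ⊗[F] g,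
      (∀ h ∈ hI, εK ⁅TensorProduct.map toK.toLinearMap LinearMap.id w,
        ((1 : K) ⊗ₜ[F] h : K ⊗[F] g)⁆ = 0) ∧
      TensorProduct.lift ((LinearMap.lsmul F g).comp
        (aeval fun k => α (bh k) : MvPolynomial κ F →ₐ[F] F).toLinearMap) w
          = eval (fun k => α (bh k)) s • x := by
  set v : ι → MvPolynomial κ F := B *ᵥ (C ∘ b.repr x)
  refine ⟨∑ i, v i ⊗ₜ[F] b i, ?_, ?_⟩
  · simp only [map_sum, TensorProduct.map_tmul, AlgHom.toLinearMap_apply, LinearMap.id_coe,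
      id_eq]
    rw [forall_apply_lie_one_tmul_eq_zero_iff hI b bh toK εK hεK]
    funext k
    calc ((stabilizerMatrix hI b bh).map toK *ᵥ fun i => toK (v i)) k
        = toK (((stabilizerMatrix hI b bh * B) *ᵥ (C ∘ b.repr x)) k) := by
          rw [← mulVec_mulVec]; exact (toK.toRingHom.map_mulVec _ _ k).symm
      _ = 0 := by
          rw [← AlgHom.coe_toRingHom, RingHom.map_mulVec, AlgHom.coe_toRingHom, hMB,
            zero_mulVec, Pi.zero_apply]
  · rw [forall_dual_lie_eq_zero_iff hI b bh] at hx
    have hv : (fun i => eval (fun k => α (bh k)) (v i)) =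
        eval (fun k => α (bh k)) s • ⇑(b.repr x) := by
      rw [← hB _ hx]
      funext i
      rw [RingHom.map_mulVec]
      congr 1
      funext j
      simp
    rw [lift_lsmul_aeval_sum_tmul b, ← b.equivFun_symm_apply, hv, map_smul, ← b.equivFun_apply,
      LinearEquiv.symm_apply_apply]

end GenericEvaluation

theorem hat_ideals_and_generic_evaluation_general
    {F : Type*} [Field F]
    {g : Type*} [LieRing g] [LieAlgebra F g]
    {ι κ : Type*} [Fintype ι] [Fintype κ]
    (b : Module.Basis ι F g)
    (hI : LieIdeal F g)
    (bh : Module.Basis κ F ↥hI)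
    (I : Ideal (MvPolynomial ι F)) :
    -- I₀ = ρ⁻¹(I) where ρ : S(𝔥) → S(𝔤); K = F(𝔵_𝔥) = Frac(S(𝔥)/I₀)
    ∀ (I₀ : Ideal (MvPolynomial κ F)),
      I₀ = Ideal.comap
        (MvPolynomial.aeval (fun k => linPoly b ((bh k : ↥hI) : g)) :
          MvPolynomial κ F →ₐ[F] MvPolynomial ι F) I →
    ∀ (K : Type*) (_ : Field K) (_ : Algebra F K),
    ∀ (toK : MvPolynomial κ F →ₐ[F] K),
      -- toK is the canonical map S(𝔥) → S(𝔥)/I₀ → K = F(𝔵_𝔥)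
      (∀ f0 : MvPolynomial κ F, toK f0 = 0 ↔ f0 ∈ I₀) →
      (∀ fq : K, ∃ p q : MvPolynomial κ F, q ∉ I₀ ∧ fq * toK q = toK p) →
    ∀ (εK : (K ⊗[F] g) →ₗ[K] K),
      -- εK extends the tautological evaluation 𝔥 → K, h ↦ (α ↦ α(h))
      (∀ h : ↥hI, εK ((1 : K) ⊗ₜ[F] (h : g)) = toK (linPoly bh h)) →
    -- (a) 𝔥⊗K is an ideal of ĝ
    ((∀ ξ : K ⊗[F] g,
        (∀ h ∈ hI, εK ⁅ξ, ((1 : K) ⊗ₜ[F] h : K ⊗[F] g)⁆ = 0) →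
        ∀ w ∈ Submodule.span K {w : K ⊗[F] g | ∃ y ∈ hI, w = (1 : K) ⊗ₜ[F] y},
          ⁅ξ, w⁆ ∈ Submodule.span K
            {w : K ⊗[F] g | ∃ y ∈ hI, w = (1 : K) ⊗ₜ[F] y}) ∧
    -- (b) ĥ = (𝔥⊗K) ∩ ker εK is an ideal of ĝ
    (∀ ξ : K ⊗[F] g,
        (∀ h ∈ hI, εK ⁅ξ, ((1 : K) ⊗ₜ[F] h : K ⊗[F] g)⁆ = 0) →
        ∀ w ∈ Submodule.span K {w : K ⊗[F] g | ∃ y ∈ hI, w = (1 : K) ⊗ₜ[F] y}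
            ⊓ LinearMap.ker εK,
          ⁅ξ, w⁆ ∈ Submodule.span K
            {w : K ⊗[F] g | ∃ y ∈ hI, w = (1 : K) ⊗ₜ[F] y}
            ⊓ LinearMap.ker εK) ∧
    -- (c) for generic α ∈ 𝔵_𝔥, the evaluation ĝ(α) equals 𝔤_α
    (∃ q : MvPolynomial κ F, q ∉ I₀ ∧
      ∀ α : Module.Dual F ↥hI,
        (∀ f0 ∈ I₀, MvPolynomial.eval (fun k => α (bh k)) f0 = 0) →
        MvPolynomial.eval (fun k => α (bh k)) q ≠ 0 →
        {x : g | ∃ w : MvPolynomial κ F ⊗[F] g,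
          (∀ h ∈ hI, εK ⁅TensorProduct.map toK.toLinearMap LinearMap.id w,
              ((1 : K) ⊗ₜ[F] h : K ⊗[F] g)⁆ = 0) ∧
          TensorProduct.lift ((LinearMap.lsmul F g).comp
              (MvPolynomial.aeval (fun k => α (bh k)) :
                MvPolynomial κ F →ₐ[F] F).toLinearMap) w
            = MvPolynomial.eval (fun k => α (bh k)) q • x}
        = {x : g | ∀ h : ↥hI, α ⟨⁅x, (h : g)⁆, hI.lie_mem h.2⟩ = 0})) := by
  intro I₀ _ K _ _ toK hker hfrac εK hεK
  have hfrac' : ∀ y : K, ∃ p q, toK q ≠ 0 ∧ y * toK q = toK p := fun y => by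
    obtain ⟨p, q, hq, hpq⟩ := hfrac y
    exact ⟨p, q, mt (hker q).mp hq, hpq⟩
  obtain ⟨s, hs, B, hMB, hB⟩ := Matrix.exists_mul_map_eq_zero_and_mulVec_eq_smul toK.toRingHom
    hfrac' F (stabilizerMatrix hI b bh)
  refine ⟨fun ξ _ w hw => lie_mem_span_one_tmul hI ξ hw,
    fun ξ hξ w hw => ⟨lie_mem_span_one_tmul hI ξ hw.1,
      apply_lie_eq_zero_of_mem_span_one_tmul hI εK hξ hw.1⟩,
    s, fun hsI => hs ((hker s).mpr hsI), fun α hα hsα => Set.ext fun x => ⟨?_, ?_⟩⟩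
  · rintro ⟨w, hw, hwx⟩ h
    exact dual_lie_eq_zero_of_lift_eq_smul hI bh toK εK b hεK α
      (fun f hf => hα f ((hker f).mp hf)) hsα hw hwx h
  · exact fun hx => exists_lift_eq_smul_of_dual_lie_eq_zero hI bh toK εK b hεK hMB α (hB _) hx

/-- For a commutative ideal 𝔥 of 𝔤, a closed irreducible
G-invariant X ⊆ 𝔤* (with prime Poisson ideal I), 𝔵_𝔥 its image in 𝔥*
(with ideal I₀ = ρ⁻¹(I)), and K = F(𝔵_𝔥):  𝔥⊗K is an ideal of
ĝ = {ξ ∈ 𝔤⊗K : [ξ,𝔥] vanishes on 𝔵_𝔥}, ĥ = {ξ ∈ 𝔥⊗K : α(ξ(α)) = 0} is an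
ideal of ĝ, and for generic α ∈ 𝔵_𝔥 the evaluation ĝ(α) equals the
stabilizer 𝔤_α = {x : α([x,𝔥]) = 0}. -/
theorem hat_ideals_and_generic_evaluation
    {F : Type*} [Field F] [CharZero F] [IsAlgClosed F]
    {g : Type*} [LieRing g] [LieAlgebra F g] [Module.Finite F g]
    {ι κ : Type*} [Fintype ι] [DecidableEq ι] [Fintype κ] [DecidableEq κ]
    (b : Module.Basis ι F g)
    (hI : LieIdeal F g)
    (hcomm : ∀ x ∈ hI, ∀ y ∈ hI, ⁅x, y⁆ = (0 : g))
    (bh : Module.Basis κ F ↥hI)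
    (I : Ideal (MvPolynomial ι F)) [I.IsPrime]
    (hIG : ∀ f ∈ I, ∀ p : MvPolynomial ι F, kirillovBracket b f p ∈ I) :
    -- I₀ = ρ⁻¹(I) where ρ : S(𝔥) → S(𝔤); K = F(𝔵_𝔥) = Frac(S(𝔥)/I₀)
    ∀ (I₀ : Ideal (MvPolynomial κ F)),
      I₀ = Ideal.comap
        (MvPolynomial.aeval (fun k => linPoly b ((bh k : ↥hI) : g)) :
          MvPolynomial κ F →ₐ[F] MvPolynomial ι F) I →
    ∀ (K : Type*) (_ : Field K) (_ : Algebra F K),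
    ∀ (toK : MvPolynomial κ F →ₐ[F] K),
      -- toK is the canonical map S(𝔥) → S(𝔥)/I₀ → K = F(𝔵_𝔥)
      (∀ f0 : MvPolynomial κ F, toK f0 = 0 ↔ f0 ∈ I₀) →
      (∀ fq : K, ∃ p q : MvPolynomial κ F, q ∉ I₀ ∧ fq * toK q = toK p) →
    ∀ (εK : (K ⊗[F] g) →ₗ[K] K),
      -- εK extends the tautological evaluation 𝔥 → K, h ↦ (α ↦ α(h))
      (∀ h : ↥hI, εK ((1 : K) ⊗ₜ[F] (h : g)) = toK (linPoly bh h)) →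
    -- (a) 𝔥⊗K is an ideal of ĝ
    ((∀ ξ : K ⊗[F] g,
        (∀ h ∈ hI, εK ⁅ξ, ((1 : K) ⊗ₜ[F] h : K ⊗[F] g)⁆ = 0) →
        ∀ w ∈ Submodule.span K {w : K ⊗[F] g | ∃ y ∈ hI, w = (1 : K) ⊗ₜ[F] y},
          ⁅ξ, w⁆ ∈ Submodule.span K
            {w : K ⊗[F] g | ∃ y ∈ hI, w = (1 : K) ⊗ₜ[F] y}) ∧
    -- (b) ĥ = (𝔥⊗K) ∩ ker εK is an ideal of ĝ
    (∀ ξ : K ⊗[F] g,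
        (∀ h ∈ hI, εK ⁅ξ, ((1 : K) ⊗ₜ[F] h : K ⊗[F] g)⁆ = 0) →
        ∀ w ∈ Submodule.span K {w : K ⊗[F] g | ∃ y ∈ hI, w = (1 : K) ⊗ₜ[F] y}
            ⊓ LinearMap.ker εK,
          ⁅ξ, w⁆ ∈ Submodule.span K
            {w : K ⊗[F] g | ∃ y ∈ hI, w = (1 : K) ⊗ₜ[F] y}
            ⊓ LinearMap.ker εK) ∧
    -- (c) for generic α ∈ 𝔵_𝔥, the evaluation ĝ(α) equals 𝔤_α
    (∃ q : MvPolynomial κ F, q ∉ I₀ ∧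
      ∀ α : Module.Dual F ↥hI,
        (∀ f0 ∈ I₀, MvPolynomial.eval (fun k => α (bh k)) f0 = 0) →
        MvPolynomial.eval (fun k => α (bh k)) q ≠ 0 →
        {x : g | ∃ w : MvPolynomial κ F ⊗[F] g,
          (∀ h ∈ hI, εK ⁅TensorProduct.map toK.toLinearMap LinearMap.id w,
              ((1 : K) ⊗ₜ[F] h : K ⊗[F] g)⁆ = 0) ∧
          TensorProduct.lift ((LinearMap.lsmul F g).comp
              (MvPolynomial.aeval (fun k => α (bh k)) :
                MvPolynomial κ F →ₐ[F] F).toLinearMap) w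
            = MvPolynomial.eval (fun k => α (bh k)) q • x}
        = {x : g | ∀ h : ↥hI, α ⟨⁅x, (h : g)⁆, hI.lie_mem h.2⟩ = 0})) :=
  hat_ideals_and_generic_evaluation_general b hI bh I
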